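/- Suppose g : ℝ → (0,∞) is continuous with g(z) ~ c e^{-kz} as z → +∞ for constants c > 0, k > 0 (i.e., g(z)e^{kz} → c). Then lim_{z→+∞} g(z)∫₀^z g(y)⁻¹ dy = 1/k. -/

import Mathlib

/-!
Asymptotic equivalence `u ~ v` at `+∞` passes to the integrals `∫ₐ^z u ~ ∫ₐ^z v` when `v ≥ 0`
has divergent integral. Hence `1 / g(y) ~ c⁻¹ e^{ky}` gives `∫₀^z 1 / g ~ c⁻¹ e^{kz} / k`, and
multiplying by `g(z) ~ c e^{-kz}` leaves `1 / k`.
-/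

open Filter Asymptotics MeasureTheory Real

theorem MeasureTheory.LocallyIntegrable.intervalIntegrable {E : Type*} [NormedAddCommGroup E]
    {f : ℝ → E} (hf : LocallyIntegrable f) (a b : ℝ) : IntervalIntegrable f volume a b :=
  (hf.integrableOn_isCompact isCompact_uIcc).intervalIntegrable

namespace Asymptotics

theorem IsLittleO.intervalIntegral_atTop {E : Type*} [NormedAddCommGroup E] [NormedSpace ℝ E]
    {f : ℝ → E} {g : ℝ → ℝ} {a : ℝ}
    (hf : LocallyIntegrable f) (hg : LocallyIntegrable g) (hfg : f =o[atTop] g)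
    (hg_nonneg : ∀ᶠ y in atTop, 0 ≤ g y)
    (hg_int : Tendsto (fun z => ∫ y in a..z, g y) atTop atTop) :
    (fun z => ∫ y in a..z, f y) =o[atTop] fun z => ∫ y in a..z, g y := by
  refine isLittleO_iff.2 fun ε hε => ?_
  obtain ⟨M, hM⟩ := eventually_atTop.1 ((isLittleO_iff.1 hfg (half_pos hε)).and hg_nonneg)
  -- the contribution of `[a, M]` is a constant, eventually dominated by `ε / 2 * ∫ g`
  filter_upwards [eventually_ge_atTop M, hg_int.eventually_ge_atTop
      ((‖∫ y in a..M, f y‖ + ε / 2 * |∫ y in a..M, g y|) / (ε / 2))] with z hzM hzC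
  rw [div_le_iff₀ (half_pos hε)] at hzC
  have htail : ‖∫ y in M..z, f y‖ ≤ ε / 2 * ∫ y in M..z, g y := by
    rw [← intervalIntegral.integral_const_mul]
    refine intervalIntegral.norm_integral_le_of_norm_le hzM (ae_of_all _ fun y hy => ?_)
      ((hg.intervalIntegrable M z).const_mul _)
    obtain ⟨hfy, hgy⟩ := hM y hy.1.le
    rwa [norm_of_nonneg hgy] at hfy
  have hg_split : ∫ y in M..z, g y = (∫ y in a..z, g y) - ∫ y in a..M, g y :=
    (intervalIntegral.integral_interval_sub_left (hg.intervalIntegrable a z)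
      (hg.intervalIntegrable a M)).symm
  rw [← intervalIntegral.integral_add_adjacent_intervals (hf.intervalIntegrable a M)
    (hf.intervalIntegrable M z)]
  calc ‖(∫ y in a..M, f y) + ∫ y in M..z, f y‖
      ≤ ‖∫ y in a..M, f y‖ + ‖∫ y in M..z, f y‖ := norm_add_le _ _
    _ ≤ ε * ∫ y in a..z, g y := by
      rw [hg_split] at htail
      linarith [mul_le_mul_of_nonneg_left (neg_abs_le (∫ y in a..M, g y)) (half_pos hε).le]
    _ ≤ ε * ‖∫ y in a..z, g y‖ := by
      gcongr
      exact le_norm_self _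

theorem IsEquivalent.intervalIntegral_atTop {u v : ℝ → ℝ} {a : ℝ}
    (hu : LocallyIntegrable u) (hv : LocallyIntegrable v) (huv : u ~[atTop] v)
    (hv_nonneg : ∀ᶠ y in atTop, 0 ≤ v y)
    (hv_int : Tendsto (fun z => ∫ y in a..z, v y) atTop atTop) :
    (fun z => ∫ y in a..z, u y) ~[atTop] fun z => ∫ y in a..z, v y :=
  (huv.isLittleO.intervalIntegral_atTop (hu.sub hv) hv hv_nonneg hv_int).congr_left fun z =>
    intervalIntegral.integral_sub (hu.intervalIntegrable a z) (hv.intervalIntegrable a z)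

end Asymptotics

theorem integral_exp_mul_left {k : ℝ} (hk : k ≠ 0) (a b : ℝ) :
    ∫ y in a..b, exp (k * y) = (exp (k * b) - exp (k * a)) / k := by
  rw [intervalIntegral.integral_comp_mul_left (fun x => exp x) hk, integral_exp, smul_eq_mul,
    inv_mul_eq_div]

theorem tendsto_exp_mul_div_atTop {k : ℝ} (hk : 0 < k) :
    Tendsto (fun z => exp (k * z) / k) atTop atTop :=
  (tendsto_exp_comp_atTop.2 (tendsto_id.const_mul_atTop hk)).atTop_div_const hk

theorem isEquivalent_integral_exp_mul_atTop {k : ℝ} (hk : 0 < k) (a : ℝ) :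
    (fun z => ∫ y in a..z, exp (k * y)) ~[atTop] fun z => exp (k * z) / k := by
  refine (IsEquivalent.refl.add_const_of_norm_tendsto_atTop (c := -(exp (k * a) / k))
    (tendsto_norm_atTop_atTop.comp (tendsto_exp_mul_div_atTop hk))).congr_left
    (Eventually.of_forall fun z => ?_)
  simp only [integral_exp_mul_left hk.ne']
  ring

theorem matching_limit_plus_infinity (g : ℝ → ℝ) (c k : ℝ)
    (hg : Continuous g) (hgpos : ∀ y, 0 < g y) (hc : 0 < c) (hk : 0 < k)
    (hlim : Filter.Tendsto (fun z => g z * Real.exp (k * z)) Filter.atTop (nhds c)) :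
    Filter.Tendsto (fun z => g z * ∫ y in (0 : ℝ)..z, (g y)⁻¹)
      Filter.atTop (nhds (1 / k)) := by
  have hg_equiv : g ~[atTop] fun z => c * exp (-(k * z)) := by
    refine isEquivalent_of_tendsto_one ?_
    refine (div_self hc.ne' ▸ hlim.div_const c).congr fun z => ?_
    simp only [Pi.div_apply, exp_neg]
    field_simp
  have hinv_equiv : (fun y => (g y)⁻¹) ~[atTop] fun y => c⁻¹ * exp (k * y) :=
    hg_equiv.inv.congr_right (Eventually.of_forall fun y => by simp [exp_neg, mul_comm])
  have hexp_equiv : (fun z => ∫ y in (0 : ℝ)..z, c⁻¹ * exp (k * y)) ~[atTop]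
      fun z => c⁻¹ * (exp (k * z) / k) := by
    simp only [intervalIntegral.integral_const_mul]
    exact (IsEquivalent.refl (u := fun _ : ℝ => c⁻¹)).mul
      (isEquivalent_integral_exp_mul_atTop hk 0)
  have hint_equiv : (fun z => ∫ y in (0 : ℝ)..z, (g y)⁻¹) ~[atTop]
      fun z => c⁻¹ * (exp (k * z) / k) :=
    .trans (hinv_equiv.intervalIntegral_atTop
      (hg.inv₀ fun y => (hgpos y).ne').locallyIntegrable
      (by fun_prop : Continuous fun y => c⁻¹ * exp (k * y)).locallyIntegrable
      (Eventually.of_forall fun y => by positivity)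
      (hexp_equiv.symm.tendsto_atTop
        ((tendsto_exp_mul_div_atTop hk).const_mul_atTop (inv_pos.2 hc)))) hexp_equiv
  refine (hg_equiv.mul hint_equiv).symm.tendsto_nhds (tendsto_const_nhds.congr fun z => ?_)
  simp only [Pi.mul_apply, exp_neg]
  field_simp
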